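/- arXiv:1204.0210 — 3 statements merged into one kernel-verified Lean document; each statement's English description precedes it below -/
import Mathlib

section
/- For integers d, q ≥ 2, if a finite simple graph G is q-locatable in ℤ^d, then G is q^d-colorable. -/
open SimpleGraph

/-- Cast an integer grid point to a real point. -/
def castPt {d : ℕ} (p : Fin d → ℤ) : Fin d → ℝ := fun i => (p i : ℝ)

/-- The grid points lying on the closed segment in `ℝ^d` joining `a` and `b`. -/
def segGridPts {d : ℕ} (a b : Fin d → ℤ) : Set (Fin d → ℤ) :=
  {p | castPt p ∈ segment ℝ (castPt a) (castPt b)}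

/-- `φ` is a grid drawing of `G` in `ℤ^d`: it is injective and no vertex image other than the
endpoints lies on the closed segment representing an edge. -/
def IsGridDrawing {V : Type*} {d : ℕ} (G : SimpleGraph V) (φ : V → Fin d → ℤ) : Prop :=
  Function.Injective φ ∧
    ∀ u v w : V, G.Adj u v →
      castPt (φ w) ∈ segment ℝ (castPt (φ u)) (castPt (φ v)) → w = u ∨ w = v

/-- `G` is `q`-locatable in `ℤ^d`: it has a grid drawing in which every edge segment contains
at most `q` grid points. -/
def IsQLocatable {V : Type*} (G : SimpleGraph V) (d q : ℕ) : Prop :=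
  ∃ φ : V → Fin d → ℤ, IsGridDrawing G φ ∧
    ∀ u v : V, G.Adj u v → (segGridPts (φ u) (φ v)).ncard ≤ q

/-- A primitive grid drawing: every edge segment contains exactly its two endpoints
as grid points. -/
def IsPrimitiveDrawing {V : Type*} {d : ℕ} (G : SimpleGraph V) (φ : V → Fin d → ℤ) : Prop :=
  IsGridDrawing G φ ∧ ∀ u v : V, G.Adj u v → segGridPts (φ u) (φ v) = {φ u, φ v}

/-- `G` is locatable in `ℤ^d`: it has a primitive grid drawing in `ℤ^d`. -/
def IsLocatable {V : Type*} (G : SimpleGraph V) (d : ℕ) : Prop :=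
  ∃ φ : V → Fin d → ℤ, IsPrimitiveDrawing G φ

/-- The rank of a grid point in `ℤ^d`: the tuple of its first `d - 1` coordinates. -/
def rank {d : ℕ} (p : Fin d → ℤ) : Fin (d - 1) → ℤ :=
  fun i => p (Fin.castLE (Nat.sub_le d 1) i)

/-- `G` is embeddable on `l` columns: it has a grid drawing in `ℤ²` in which the first
coordinates of the vertex images take at most `l` distinct values. -/
def EmbeddableOnCols {V : Type*} (G : SimpleGraph V) (l : ℕ) : Prop :=
  ∃ φ : V → Fin 2 → ℤ, IsGridDrawing G φ ∧ (Set.range fun v => φ v 0).ncard ≤ l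

/-- `G` can be located on `l` columns in `ℤ^d`: it has a primitive grid drawing in `ℤ^d`
using at most `l` columns. -/
def LocatableOnCols {V : Type*} (G : SimpleGraph V) (d l : ℕ) : Prop :=
  ∃ φ : V → Fin d → ℤ, IsPrimitiveDrawing G φ ∧ (Set.range fun v => rank (φ v)).ncard ≤ l

/-- A linear forest: an acyclic graph with maximum degree at most two
(i.e. a disjoint union of paths). -/
def IsLinearForest {W : Type*} (H : SimpleGraph W) : Prop :=
  H.IsAcyclic ∧ ∀ v : W, {w | H.Adj v w}.ncard ≤ 2

/-! Colour each vertex by the residues mod `q` of the coordinates of its image. If two adjacent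
vertices `u`, `v` had the same colour, then `φ v = φ u + q • c` with `c ≠ 0`, and the `q + 1`
distinct grid points `φ u + t • c`, `0 ≤ t ≤ q`, would all lie on the segment of the edge `uv`. -/

section

variable {d : ℕ}

lemma castPt_le_castPt {p p' : Fin d → ℤ} : castPt p ≤ castPt p' ↔ p ≤ p' := by
  simp [castPt, Pi.le_def]

lemma segGridPts_subset_Icc (a b : Fin d → ℤ) :
    segGridPts a b ⊆ Set.Icc (a ⊓ b) (a ⊔ b) := by
  intro p hp
  have hbox : segment ℝ (castPt a) (castPt b) ⊆ Set.Icc (castPt (a ⊓ b)) (castPt (a ⊔ b)) :=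
    (convex_Icc _ _).segment_subset
      ⟨castPt_le_castPt.2 inf_le_left, castPt_le_castPt.2 le_sup_left⟩
      ⟨castPt_le_castPt.2 inf_le_right, castPt_le_castPt.2 le_sup_right⟩
  exact ⟨castPt_le_castPt.1 (hbox hp).1, castPt_le_castPt.1 (hbox hp).2⟩

lemma segGridPts_finite (a b : Fin d → ℤ) : (segGridPts a b).Finite :=
  (Set.finite_Icc _ _).subset (segGridPts_subset_Icc a b)

lemma add_nsmul_mem_segGridPts (a c : Fin d → ℤ) {n t : ℕ} (ht : t ≤ n) :
    a + t • c ∈ segGridPts a (a + n • c) := by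
  rcases n.eq_zero_or_pos with rfl | hn
  · obtain rfl : t = 0 := by omega
    simp [segGridPts]
  · rw [segGridPts, Set.mem_ofPred_eq, segment_eq_image']
    refine ⟨t / n, ⟨by positivity, div_le_one_of_le₀ (by exact_mod_cast ht) (by positivity)⟩, ?_⟩
    funext i
    simp only [nsmul_eq_mul, Pi.add_apply, castPt, Pi.smul_apply, Pi.sub_apply, Pi.mul_apply,
      Pi.natCast_apply, Int.cast_add, Int.cast_mul, Int.cast_natCast, add_sub_cancel_left,
      smul_eq_mul, add_right_inj]
    field_simp

lemma le_ncard_segGridPts (a : Fin d → ℤ) {c : Fin d → ℤ} (hc : c ≠ 0) (n : ℕ) :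
    n + 1 ≤ (segGridPts a (a + n • c)).ncard := by
  have hinj : Function.Injective fun t : ℕ => a + t • c := by
    intro s t hst
    have : (s : ℤ) • c = (t : ℤ) • c := by simpa [natCast_zsmul] using hst
    exact_mod_cast smul_left_injective ℤ hc this
  calc n + 1 = (Set.Iic n).ncard := (Set.ncard_Iic_nat n).symm
    _ ≤ _ := Set.ncard_le_ncard_of_injOn _ (fun t ht => add_nsmul_mem_segGridPts a c ht)
        hinj.injOn (segGridPts_finite _ _)

lemma exists_eq_add_nsmul_of_intCast_eq {ι : Type*} {q : ℕ} {a b : ι → ℤ}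
    (h : (fun i => (a i : ZMod q)) = fun i => (b i : ZMod q)) : ∃ c, b = a + q • c := by
  have hdvd (i : ι) : (q : ℤ) ∣ b i - a i :=
    (ZMod.intCast_eq_intCast_iff_dvd_sub _ _ _).1 (congrFun h i)
  choose c hc using hdvd
  exact ⟨c, funext fun i => by simp [← hc i]⟩

lemma intCast_ne_of_ncard_segGridPts_le {q : ℕ} {a b : Fin d → ℤ} (hab : a ≠ b)
    (hcard : (segGridPts a b).ncard ≤ q) :
    (fun i => (a i : ZMod q)) ≠ fun i => (b i : ZMod q) := by
  intro h
  obtain ⟨c, rfl⟩ := exists_eq_add_nsmul_of_intCast_eq h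
  have hc : c ≠ 0 := by rintro rfl; simp at hab
  have hle := le_ncard_segGridPts a hc q
  omega

end

theorem colorable_of_qLocatable_general {V : Type*} (G : SimpleGraph V)
    (d q : ℕ) (hq : 2 ≤ q) (h : IsQLocatable G d q) :
    G.Colorable (q ^ d) := by
  obtain ⟨φ, ⟨hinj, -⟩, hcard⟩ := h
  have : NeZero q := ⟨by omega⟩
  let C : G.Coloring (Fin d → ZMod q) := Coloring.mk (fun v i => (φ v i : ZMod q))
    fun huv => intCast_ne_of_ncard_segGridPts_le (hinj.ne huv.ne) (hcard _ _ huv)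
  simpa using C.colorable

theorem colorable_of_qLocatable {V : Type*} [Fintype V] (G : SimpleGraph V)
    (d q : ℕ) (hd : 2 ≤ d) (hq : 2 ≤ q) (h : IsQLocatable G d q) :
    G.Colorable (q ^ d) :=
  colorable_of_qLocatable_general G d q hq h
end

section
/- A finite simple graph G is locatable in ℤ² if and only if G is 4-colorable. -/
open SimpleGraph

/-! If two grid points are congruent mod `2`, the midpoint of their segment is a grid point, so
the parity vector `p mod 2 ∈ (ℤ/2)^d` properly colours any primitive drawing with `2^d` colours.
Conversely, a segment `ab` is primitive as soon as the coordinates of `b - a` satisfy a Bézout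
identity: that identity reads off the parameter of a grid point on `ab` as an integer in `[0, 1]`.
Given a `4`-colouring, put the vertices of colour `c` in column `c` at distinct heights
`≡ r(c) (mod 6)`, where `r = (0, 1, 3, 2)`: for `c ≠ c'` the column offset `c' - c` divides `6`
and is coprime to `r(c') - r(c)`, hence to the height difference. -/

lemma segGridPts_eq_pair_of_sum_mul_eq_one {d : ℕ} {a b : Fin d → ℤ} (u : Fin d → ℤ)
    (hu : ∑ i, u i * (b i - a i) = 1) : segGridPts a b = {a, b} := by
  ext p
  refine ⟨fun hp => ?_, ?_⟩
  · rw [segGridPts, Set.mem_ofPred_eq, segment_eq_image'] at hp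
    obtain ⟨θ, ⟨hθ0, hθ1⟩, hθ⟩ := hp
    have hcoord : ∀ i, (p i : ℝ) - a i = θ * (b i - a i) := fun i => by
      have := congrFun hθ i
      simp only [castPt, Pi.add_apply, Pi.smul_apply, Pi.sub_apply, smul_eq_mul] at this
      linarith
    obtain ⟨m, rfl⟩ : ∃ m : ℤ, θ = m := ⟨∑ i, u i * (p i - a i), by
      push_cast
      simp_rw [hcoord, mul_left_comm _ θ, ← Finset.mul_sum]
      have : ∑ i, (u i : ℝ) * (b i - a i) = 1 := by exact_mod_cast hu
      rw [this, mul_one]⟩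
    have hm : m = 0 ∨ m = 1 := by
      have : 0 ≤ m ∧ m ≤ 1 := ⟨by exact_mod_cast hθ0, by exact_mod_cast hθ1⟩
      omega
    rcases hm with rfl | rfl
    · left
      exact funext fun i => by exact_mod_cast (by simpa [sub_eq_zero] using hcoord i)
    · right
      exact funext fun i => by exact_mod_cast (by simpa using hcoord i)
  · rintro (rfl | rfl)
    · exact left_mem_segment ℝ _ _
    · exact right_mem_segment ℝ _ _

lemma segGridPts_eq_pair_of_isCoprime {a b : Fin 2 → ℤ}
    (h : IsCoprime (b 0 - a 0) (b 1 - a 1)) : segGridPts a b = {a, b} := by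
  obtain ⟨s, t, hst⟩ := h
  exact segGridPts_eq_pair_of_sum_mul_eq_one ![s, t] (by simpa [Fin.sum_univ_two] using hst)

lemma segGridPts_ne_pair_of_two_dvd {d : ℕ} {a b : Fin d → ℤ} (hab : a ≠ b)
    (h : ∀ i, (2 : ℤ) ∣ b i - a i) : segGridPts a b ≠ {a, b} := by
  choose k hk using h
  have hb : b = a + k + k := funext fun i => by simp only [Pi.add_apply]; linarith [hk i]
  subst hb
  have hk0 : k ≠ 0 := by rintro rfl; simp at hab
  have hmid : a + k ∈ segGridPts a (a + k + k) := by
    refine ⟨1 / 2, 1 / 2, by norm_num, by norm_num, by norm_num, funext fun i => ?_⟩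
    simp only [castPt, Pi.add_apply, Pi.smul_apply, smul_eq_mul]
    push_cast
    ring
  intro heq
  rw [heq] at hmid
  rcases hmid with h | h
  · exact hk0 (by simpa using h)
  · exact hk0 (by simpa using (Set.mem_singleton_iff.mp h))

lemma isPrimitiveDrawing_of_injective {V : Type*} {d : ℕ} {G : SimpleGraph V}
    {φ : V → Fin d → ℤ} (hinj : Function.Injective φ)
    (hseg : ∀ u v, G.Adj u v → segGridPts (φ u) (φ v) = {φ u, φ v}) : IsPrimitiveDrawing G φ := by
  refine ⟨⟨hinj, fun u v w huv hw => ?_⟩, hseg⟩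
  have hw' : φ w ∈ segGridPts (φ u) (φ v) := hw
  rw [hseg u v huv] at hw'
  exact hw'.imp (@hinj _ _) (@hinj _ _)

def IsPrimitiveDrawing.parityColoring {V : Type*} {d : ℕ} {G : SimpleGraph V}
    {φ : V → Fin d → ℤ} (h : IsPrimitiveDrawing G φ) : G.Coloring (Fin d → ZMod 2) :=
  Coloring.mk (fun v i => (φ v i : ZMod 2)) fun {u v} huv heq => by
    refine segGridPts_ne_pair_of_two_dvd (fun h' => huv.ne (h.1.1 h')) (fun i => ?_) (h.2 u v huv)
    exact (ZMod.intCast_eq_intCast_iff_dvd_sub _ _ 2).mp (congrFun heq i)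

lemma IsLocatable.colorable {V : Type*} {G : SimpleGraph V} {d : ℕ} (h : IsLocatable G d) :
    G.Colorable (2 ^ d) := by
  obtain ⟨φ, hφ⟩ := h
  simpa using hφ.parityColoring.colorable

def colorRowOffset : Fin 4 → ℤ := ![0, 1, 3, 2]

lemma sub_dvd_six_and_isCoprime_colorRowOffset {c c' : Fin 4} (h : c ≠ c') :
    ((c' : ℤ) - c) ∣ 6 ∧ IsCoprime ((c' : ℤ) - c) (colorRowOffset c' - colorRowOffset c) := by
  rw [Int.isCoprime_iff_gcd_eq_one]
  revert c c'
  decide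

def fourColorDrawing {V : Type*} (C : V → Fin 4) (n : V → ℤ) : V → Fin 2 → ℤ :=
  fun v => ![C v, 6 * n v + colorRowOffset (C v)]

section FourColorDrawing

variable {V : Type*} {C : V → Fin 4} {n : V → ℤ}

lemma fourColorDrawing_injective (hn : Function.Injective n) :
    Function.Injective (fourColorDrawing C n) := by
  intro u v huv
  have h0 := congrFun huv 0
  have h1 := congrFun huv 1
  simp only [fourColorDrawing, Matrix.cons_val_one, Matrix.cons_val_zero] at h0 h1
  have hC : C u = C v := Fin.ext (by exact_mod_cast h0)
  rw [hC] at h1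
  exact hn (by omega)

lemma isCoprime_fourColorDrawing_sub {u v : V} (h : C u ≠ C v) :
    IsCoprime (fourColorDrawing C n v 0 - fourColorDrawing C n u 0)
      (fourColorDrawing C n v 1 - fourColorDrawing C n u 1) := by
  obtain ⟨⟨m, hm⟩, hcop⟩ := sub_dvd_six_and_isCoprime_colorRowOffset h
  simp only [fourColorDrawing, Matrix.cons_val_zero, Matrix.cons_val_one]
  have hdiff : 6 * n v + colorRowOffset (C v) - (6 * n u + colorRowOffset (C u)) =
      colorRowOffset (C v) - colorRowOffset (C u) + ((C v : ℤ) - C u) * (m * (n v - n u)) := by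
    rw [← mul_assoc, ← hm]
    ring
  rw [hdiff]
  exact hcop.add_mul_left_right _

end FourColorDrawing

lemma SimpleGraph.Colorable.isLocatable_two {V : Type*} [Countable V] {G : SimpleGraph V}
    (h : G.Colorable 4) : IsLocatable G 2 := by
  obtain ⟨C⟩ := h
  obtain ⟨n, hn⟩ := Countable.exists_injective_nat V
  refine ⟨fourColorDrawing C (fun v => n v), isPrimitiveDrawing_of_injective
    (fourColorDrawing_injective (Nat.cast_injective.comp hn)) fun u v huv => ?_⟩
  exact segGridPts_eq_pair_of_isCoprime (isCoprime_fourColorDrawing_sub (C.valid huv))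

theorem locatable_iff_four_colorable {V : Type*} [Fintype V] (G : SimpleGraph V) :
    IsLocatable G 2 ↔ G.Colorable 4 :=
  ⟨IsLocatable.colorable, Colorable.isLocatable_two⟩
end

section
/- Let d ≥ 1 be an integer and let G be a finite simple graph with maximum degree Δ(G) ≤ 2^{d+1} − 1. Then G can be located on 2^d columns in ℤ^{d+1}. -/
open SimpleGraph

/-!
Identify the `2 ^ d` columns with the cube `{0, 1} ^ d`: two different columns differ by exactly
one in some coordinate, so every edge between different columns is primitive. Among all
colourings of `V` by the cube, one minimising the number of monochromatic edges gives every vertex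
at most one neighbour of its own colour, since otherwise recolouring it with a colour that occurs
at most once among its `< 2 · 2 ^ d` neighbours lowers that number. The monochromatic edges then
form a matching, and heights that put the two ends of each matching edge at consecutive integers
make the vertical edges primitive as well.
-/

open Finset

lemma castPt_injective {d : ℕ} : Function.Injective (castPt (d := d)) :=
  fun _ _ h => funext fun i => by simpa [castPt] using congrFun h i

lemma segGridPts_eq_pair_of_abs_sub_eq_one {d : ℕ} {a b : Fin d → ℤ} {i : Fin d}
    (hi : |b i - a i| = 1) : segGridPts a b = {a, b} := by
  ext p
  refine ⟨fun hp => ?_, ?_⟩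
  · rw [segGridPts, Set.mem_ofPred_eq, segment_eq_image'] at hp
    obtain ⟨θ, ⟨hθ₀, hθ₁⟩, hθ⟩ := hp
    have hcoord : (p i : ℝ) = a i + θ * (b i - a i) := by
      simpa [castPt] using (congrFun hθ i).symm
    have hsq : ((b i : ℝ) - a i) ^ 2 = 1 := by
      have : (b i - a i) ^ 2 = 1 := by rw [← sq_abs, hi, one_pow]
      exact_mod_cast this
    -- `b i - a i = ±1` makes `θ` the integer `(p i - a i) * (b i - a i)`, hence `0` or `1`
    have hθint : θ = ((p i - a i) * (b i - a i) : ℤ) := by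
      push_cast
      linear_combination (a i - (b i : ℝ)) * hcoord - θ * hsq
    rw [hθint] at hθ₀ hθ₁
    have hk : (p i - a i) * (b i - a i) = 0 ∨ (p i - a i) * (b i - a i) = 1 := by
      have : 0 ≤ (p i - a i) * (b i - a i) := by exact_mod_cast hθ₀
      have : (p i - a i) * (b i - a i) ≤ 1 := by exact_mod_cast hθ₁
      omega
    rcases hk with hk | hk <;> rw [hk] at hθint <;> subst hθint
    · exact Or.inl (castPt_injective (by simpa using hθ.symm))
    · exact Or.inr (castPt_injective (by simpa using hθ.symm))
  · rintro (rfl | rfl)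
    · exact left_mem_segment ℝ _ _
    · exact right_mem_segment ℝ _ _

lemma isPrimitiveDrawing_of_exists_abs_sub_eq_one {V : Type*} {d : ℕ} {G : SimpleGraph V}
    {φ : V → Fin d → ℤ} (hφ : Function.Injective φ)
    (hadj : ∀ u v, G.Adj u v → ∃ i, |φ v i - φ u i| = 1) : IsPrimitiveDrawing G φ := by
  have hprim : ∀ u v, G.Adj u v → segGridPts (φ u) (φ v) = {φ u, φ v} := fun u v huv =>
    segGridPts_eq_pair_of_abs_sub_eq_one (hadj u v huv).choose_spec
  refine ⟨⟨hφ, fun u v w huv hw => ?_⟩, hprim⟩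
  have hw' : φ w ∈ ({φ u, φ v} : Set (Fin d → ℤ)) := hprim u v huv ▸ hw
  exact hw'.imp (fun h => hφ h) (fun h => hφ h)

lemma rank_snoc {d : ℕ} (x : Fin d → ℤ) (t : ℤ) :
    rank (Fin.snoc x t : Fin (d + 1) → ℤ) = x :=
  funext fun i => Fin.snoc_castSucc (α := fun _ => ℤ) t x i

lemma ncard_range_rank_snoc_le {V α : Type*} [Finite α] {d : ℕ} (col : α → Fin d → ℤ)
    (c : V → α) (t : V → ℤ) :
    (Set.range fun v => rank (Fin.snoc (col (c v)) (t v) : Fin (d + 1) → ℤ)).ncard ≤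
      Nat.card α := by
  simp only [rank_snoc]
  calc (Set.range fun v => col (c v)).ncard ≤ (Set.range col).ncard :=
        Set.ncard_le_ncard (Set.range_comp_subset_range c col) (Set.finite_range col)
    _ ≤ Nat.card α := by
        rw [← Nat.card_coe_set_eq]
        exact Finite.card_range_le col

lemma exists_abs_sub_eq_one_of_ne {d : ℕ} {j j' : Fin d → Fin 2} (h : j ≠ j') :
    ∃ i, |((j' i : ℕ) : ℤ) - (j i : ℕ)| = 1 := by
  obtain ⟨i, hi⟩ := Function.ne_iff.1 h
  refine ⟨i, (abs_eq zero_le_one).2 ?_⟩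
  have := Fin.val_ne_of_ne hi
  omega

lemma sum_sum_sub_sum_sum_of_eq_of_ne {ι M : Type*} [Fintype ι] [DecidableEq ι]
    [AddCommGroup M] {g g' : ι → ι → M} (i : ι) (h : ∀ a b, a ≠ i → b ≠ i → g' a b = g a b) :
    ∑ a, ∑ b, g' a b - ∑ a, ∑ b, g a b =
      ∑ b, (g' i b - g i b) + ∑ a, (g' a i - g a i) - (g' i i - g i i) := by
  have hrow : ∀ a ∈ ({i}ᶜ : Finset ι), ∑ b, (g' a b - g a b) = g' a i - g a i := fun a ha =>
    Fintype.sum_eq_single i fun b hb => sub_eq_zero.2 (h a b (by simpa using ha) hb)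
  simp only [← sum_sub_distrib]
  rw [Fintype.sum_eq_add_sum_compl i, sum_congr rfl hrow,
    Fintype.sum_eq_add_sum_compl i (fun a => g' a i - g a i)]
  abel

section Coloring

variable {V α : Type*} [Fintype V] (G : SimpleGraph V) [DecidableRel G.Adj] [DecidableEq α]

def monochromaticPairCount (c : V → α) : ℤ :=
  ∑ a, ∑ b, if G.Adj a b ∧ c a = c b then 1 else 0

lemma sum_ite_adj_and_eq_card_neighbors (c : V → α) (v : V) (x : α) :
    ∑ b, (if G.Adj v b ∧ x = c b then 1 else 0 : ℤ) = #{w ∈ G.neighborFinset v | c w = x} := by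
  rw [sum_boole, neighborFinset_eq_filter, filter_filter]
  simp_rw [eq_comm (a := x)]

lemma monochromaticPairCount_update [DecidableEq V] (c : V → α) (v : V) (x : α) :
    monochromaticPairCount G (Function.update c v x) - monochromaticPairCount G c =
      2 * ((#{w ∈ G.neighborFinset v | c w = x} : ℤ) - #{w ∈ G.neighborFinset v | c w = c v}) := by
  set c' := Function.update c v x
  unfold monochromaticPairCount
  rw [sum_sum_sub_sum_sum_of_eq_of_ne v fun a b ha hb => by
    simp only [c', Function.update_of_ne ha, Function.update_of_ne hb], sum_sub_distrib,
    sum_sub_distrib]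
  have hcol (e : V → α) : ∑ a, (if G.Adj a v ∧ e a = e v then 1 else 0 : ℤ) =
      ∑ b, (if G.Adj v b ∧ e v = e b then 1 else 0 : ℤ) := by
    simp only [G.adj_comm _ v, eq_comm (a := e v)]
  have hrow' : ∑ b, (if G.Adj v b ∧ c' v = c' b then 1 else 0 : ℤ) =
      ∑ b, (if G.Adj v b ∧ x = c b then 1 else 0 : ℤ) := by
    refine Fintype.sum_congr _ _ fun b => ?_
    rcases eq_or_ne b v with rfl | hb
    · simp
    · simp [c', Function.update_of_ne hb]
  rw [hcol, hcol, hrow', sum_ite_adj_and_eq_card_neighbors,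
    sum_ite_adj_and_eq_card_neighbors]
  simp only [G.irrefl, false_and, if_false]
  ring

theorem exists_coloring_card_monochromatic_neighbors_le_one [DecidableEq V] [Fintype α]
    [Nonempty α] (hΔ : ∀ v, G.degree v < 2 * Fintype.card α) :
    ∃ c : V → α, ∀ v, #{w ∈ G.neighborFinset v | c w = c v} ≤ 1 := by
  obtain ⟨c, -, hmin⟩ :=
    exists_min_image (univ : Finset (V → α)) (monochromaticPairCount G) univ_nonempty
  refine ⟨c, fun v => ?_⟩
  by_contra! hv
  obtain ⟨x, -, hx⟩ := exists_card_fiber_lt_of_card_lt_mul (s := G.neighborFinset v)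
    (t := univ) (f := c) (n := 2) (by simpa [mul_comm] using hΔ v)
  have := hmin (Function.update c v x) (mem_univ _)
  have := monochromaticPairCount_update G c v x
  omega

end Coloring

theorem exists_injective_abs_sub_eq_one_of_adj_unique {V : Type*} [Finite V]
    (H : SimpleGraph V) (hH : ∀ v w w', H.Adj v w → H.Adj v w' → w = w') :
    ∃ f : V → ℤ, Function.Injective f ∧ ∀ u v, H.Adj u v → |f v - f u| = 1 := by
  classical
  obtain ⟨e, he⟩ := Countable.exists_injective_nat V
  let p : V → V := fun v => if h : ∃ w, H.Adj v w then h.choose else v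
  have hp : ∀ v w, H.Adj v w → p v = w := fun v w hvw => by
    have h : ∃ w, H.Adj v w := ⟨w, hvw⟩
    simp only [p, dif_pos h]
    exact hH _ _ _ h.choose_spec hvw
  have hp_adj : ∀ v, p v ≠ v → H.Adj v (p v) := fun v hv => by
    by_cases h : ∃ w, H.Adj v w
    · exact hp v _ h.choose_spec ▸ h.choose_spec
    · exact absurd (dif_neg h) hv
  -- the pair `{v, p v}` with smaller `e`-index `k` is labelled `2k` and `2k + 1`
  refine ⟨fun v => 2 * min (e v) (e (p v)) + if e (p v) < e v then 1 else 0,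
    fun u v huv => ?_, fun u v huv => ?_⟩
  · dsimp only at huv
    split_ifs at huv with hu hv hv
    · have hpp : p u = p v := he (by omega)
      exact hH _ _ _ (hp_adj u (ne_of_apply_ne e hu.ne)).symm
        (hpp ▸ (hp_adj v (ne_of_apply_ne e hv.ne)).symm)
    · omega
    · omega
    · exact he (by omega)
  · have := he.ne huv.ne
    dsimp only
    rw [hp u v huv, hp v u huv.symm, abs_eq zero_le_one]
    split_ifs <;> omega

theorem locatableOnCols_of_maxDegree_general {V : Type*} [Fintype V] (G : SimpleGraph V)
    [DecidableRel G.Adj] (d : ℕ) (h : G.maxDegree ≤ 2 ^ (d + 1) - 1) :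
    LocatableOnCols G (d + 1) (2 ^ d) := by
  have hdeg (v : V) : G.degree v < 2 * Fintype.card (Fin d → Fin 2) := by
    have := G.degree_le_maxDegree v
    have : 0 < 2 ^ d := by positivity
    rw [pow_succ] at h
    simp only [Fintype.card_pi, Fintype.card_fin, prod_const, card_univ]
    omega
  classical
  obtain ⟨c, hc⟩ := exists_coloring_card_monochromatic_neighbors_le_one G hdeg
  let H : SimpleGraph V :=
    { Adj u v := G.Adj u v ∧ c u = c v
      symm := ⟨fun _ _ huv => ⟨huv.1.symm, huv.2.symm⟩⟩
      loopless := ⟨fun _ hv => G.irrefl hv.1⟩ }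
  obtain ⟨f, hf, hfH⟩ := exists_injective_abs_sub_eq_one_of_adj_unique H
    fun v w w' hw hw' => card_le_one.1 (hc v) w (by simp [hw.1, hw.2]) w' (by simp [hw'.1, hw'.2])
  let φ : V → Fin (d + 1) → ℤ := fun v => Fin.snoc (fun i => ((c v i : ℕ) : ℤ)) (f v)
  refine ⟨φ, isPrimitiveDrawing_of_exists_abs_sub_eq_one (fun u v huv => hf ?_)
    fun u v huv => ?_, ?_⟩
  · simpa [φ] using congrFun huv (Fin.last d)
  · by_cases hcuv : c u = c v
    · exact ⟨Fin.last d, by simpa [φ] using hfH u v ⟨huv, hcuv⟩⟩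
    · obtain ⟨i, hi⟩ := exists_abs_sub_eq_one_of_ne hcuv
      exact ⟨i.castSucc, by simpa [φ] using hi⟩
  · simpa using ncard_range_rank_snoc_le (fun j i => ((j i : ℕ) : ℤ)) c f

theorem locatableOnCols_of_maxDegree {V : Type*} [Fintype V] (G : SimpleGraph V)
    [DecidableRel G.Adj] (d : ℕ) (hd : 1 ≤ d) (h : G.maxDegree ≤ 2 ^ (d + 1) - 1) :
    LocatableOnCols G (d + 1) (2 ^ d) :=
  locatableOnCols_of_maxDegree_general G d h
end
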